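/- arXiv:2502.07977 — 5 statements merged into one kernel-verified Lean document; each statement's English description precedes it below -/
import Mathlib

section
/- Let Y(t₀), Y(t₀+1), …, Y(t) be row stochastic M×M real matrices and let γ ∈ (0,1]. Suppose there exist k pairwise disjoint intervals of consecutive indices contained in [t₀, t] such that, for each interval, the ordered product of the matrices Y over that interval has coefficient of ergodicity λ at most 1 − γ. Then δ(Y(t)·Y(t−1)·⋯·Y(t₀)) ≤ (1 − γ)^k. -/
/-- A square real matrix is row stochastic if all its entries are nonnegative and
each of its rows sums to 1. -/
def RowStochastic {M : ℕ} (A : Matrix (Fin M) (Fin M) ℝ) : Prop :=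
  (∀ i j, 0 ≤ A i j) ∧ ∀ i, ∑ j, A i j = 1

/-- Coefficient of ergodicity `δ(A) = max_j max_{i₁,i₂} |A_{i₁ j} − A_{i₂ j}|`. -/
noncomputable def ergDelta {M : ℕ} (A : Matrix (Fin M) (Fin M) ℝ) : ℝ :=
  ⨆ j, ⨆ i₁, ⨆ i₂, |A i₁ j - A i₂ j|

/-- Coefficient of ergodicity `λ(A) = 1 − min_{i₁,i₂} ∑_j min(A_{i₁ j}, A_{i₂ j})`. -/
noncomputable def ergLambda {M : ℕ} (A : Matrix (Fin M) (Fin M) ℝ) : ℝ :=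
  1 - ⨅ i₁, ⨅ i₂, ∑ j, min (A i₁ j) (A i₂ j)

/-- Backward product `Y(b)·Y(b−1)·⋯·Y(a)` of the matrices `Y` over the interval of
indices `[a, b]` (taken in decreasing index order). -/
noncomputable def backProd {M : ℕ} (Y : ℕ → Matrix (Fin M) (Fin M) ℝ) (a b : ℕ) :
    Matrix (Fin M) (Fin M) ℝ :=
  (((List.range (b + 1 - a)).map fun i => Y (a + i)).reverse).prod

open Finset Matrix

section BackProdIco

variable {α : Type*} [Monoid α]

/-- `Y (q - 1) * ⋯ * Y p`; unlike `backProd`, half-open intervals split without the truncated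
subtraction `a - 1`. -/
def backProdIco (Y : ℕ → α) (p q : ℕ) : α :=
  ((List.range' p (q - p)).map Y).reverse.prod

lemma backProdIco_mul_backProdIco (Y : ℕ → α) {p q r : ℕ} (hpq : p ≤ q) (hqr : q ≤ r) :
    backProdIco Y q r * backProdIco Y p q = backProdIco Y p r := by
  have hsplit : List.range' p (q - p) ++ List.range' q (r - q) = List.range' p (r - p) := by
    simpa [show p + (q - p) = q by omega, show q - p + (r - q) = r - p by omega] using
      (List.range'_append (s := p) (m := q - p) (n := r - q) (step := 1))
  simp only [backProdIco, ← hsplit, List.map_append, List.reverse_append, List.prod_append]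

lemma backProdIco_mem {S : Type*} [SetLike S α] [SubmonoidClass S α] {s : S} {Y : ℕ → α}
    {p q : ℕ} (hY : ∀ r, p ≤ r → r < q → Y r ∈ s) : backProdIco Y p q ∈ s := by
  refine list_prod_mem fun x hx => ?_
  obtain ⟨r, hr, rfl⟩ := List.mem_map.1 (List.mem_reverse.1 hx)
  obtain ⟨hpr, hrq⟩ := List.mem_range'_1.1 hr
  exact hY r hpr (by omega)

end BackProdIco

lemma backProd_eq_backProdIco {M : ℕ} (Y : ℕ → Matrix (Fin M) (Fin M) ℝ) (a b : ℕ) :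
    backProd Y a b = backProdIco Y a (b + 1) := by
  simp [backProd, backProdIco, List.range'_eq_map_range, Function.comp_def]

lemma rowStochastic_iff_mem {M : ℕ} {A : Matrix (Fin M) (Fin M) ℝ} :
    RowStochastic A ↔ A ∈ rowStochastic ℝ (Fin M) :=
  mem_rowStochastic_iff_sum.symm

section Ergodicity

variable {M : ℕ} {A : Matrix (Fin M) (Fin M) ℝ}

lemma ergDelta_nonneg (A : Matrix (Fin M) (Fin M) ℝ) : 0 ≤ ergDelta A :=
  Real.iSup_nonneg fun _ => Real.iSup_nonneg fun _ => Real.iSup_nonneg fun _ => abs_nonneg _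

lemma ergDelta_le {C : ℝ} (hC : 0 ≤ C) (h : ∀ j i₁ i₂, A i₁ j - A i₂ j ≤ C) :
    ergDelta A ≤ C :=
  Real.iSup_le (fun j => Real.iSup_le (fun i₁ => Real.iSup_le (fun i₂ =>
    abs_sub_le_iff.2 ⟨h j i₁ i₂, h j i₂ i₁⟩) hC) hC) hC

lemma sub_le_ergDelta (A : Matrix (Fin M) (Fin M) ℝ) (j i₁ i₂ : Fin M) :
    A i₁ j - A i₂ j ≤ ergDelta A := by
  have hbdd (f : Fin M → ℝ) : BddAbove (Set.range f) := (Set.finite_range f).bddAbove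
  exact (le_abs_self _).trans <| le_ciSup_of_le (hbdd _) j <| le_ciSup_of_le (hbdd _) i₁ <|
    le_ciSup (hbdd fun i₂ => |A i₁ j - A i₂ j|) i₂

lemma one_sub_sum_min_le_ergLambda (A : Matrix (Fin M) (Fin M) ℝ) (i₁ i₂ : Fin M) :
    1 - ∑ j, min (A i₁ j) (A i₂ j) ≤ ergLambda A := by
  have hbdd (f : Fin M → ℝ) : BddBelow (Set.range f) := (Set.finite_range f).bddBelow
  exact sub_le_sub_left (ciInf_le_of_le (hbdd _) i₁ (ciInf_le (hbdd _) i₂)) 1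

lemma ergDelta_le_one (hA : A ∈ rowStochastic ℝ (Fin M)) : ergDelta A ≤ 1 :=
  ergDelta_le zero_le_one fun _ _ _ =>
    (sub_le_sub (le_one_of_mem_rowStochastic hA) (nonneg_of_mem_rowStochastic hA)).trans_eq
      (sub_zero 1)

lemma ergLambda_nonneg (hA : A ∈ rowStochastic ℝ (Fin M)) : 0 ≤ ergLambda A := by
  rcases isEmpty_or_nonempty (Fin M) with _ | ⟨⟨i⟩⟩
  · simp [ergLambda, Real.iInf_of_isEmpty]
  · simpa [sum_row_of_mem_rowStochastic hA i] using one_sub_sum_min_le_ergLambda A i i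

lemma ergLambda_le_one (hA : A ∈ rowStochastic ℝ (Fin M)) : ergLambda A ≤ 1 :=
  sub_le_self 1 <| Real.iInf_nonneg fun _ => Real.iInf_nonneg fun _ =>
    sum_nonneg fun _ _ => le_min (nonneg_of_mem_rowStochastic hA) (nonneg_of_mem_rowStochastic hA)

end Ergodicity

section Hajnal

variable {M : ℕ} {A : Matrix (Fin M) (Fin M) ℝ}

/-- Rows `i₁, i₂` of `A` share the common part `min (A i₁ m) (A i₂ m)`, which cancels; the
excess parts have equal mass `1 - ∑ m, min (A i₁ m) (A i₂ m)`, so against column `j` of `B`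
they give values between that mass times `min_m B m j` and times `max_m B m j`. -/
lemma mul_apply_sub_mul_apply_le (hA : A ∈ rowStochastic ℝ (Fin M))
    (B : Matrix (Fin M) (Fin M) ℝ) (i₁ i₂ j : Fin M) :
    (A * B) i₁ j - (A * B) i₂ j ≤ (1 - ∑ m, min (A i₁ m) (A i₂ m)) * ergDelta B := by
  set w := fun m => min (A i₁ m) (A i₂ m)
  set s := 1 - ∑ m, w m
  have : Nonempty (Fin M) := ⟨i₁⟩
  obtain ⟨mmax, hmax⟩ := Finite.exists_max fun m => B m j
  obtain ⟨mmin, hmin⟩ := Finite.exists_min fun m => B m j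
  have hsplit (i : Fin M) :
      (A * B) i j = ∑ m, w m * B m j + ∑ m, (A i m - w m) * B m j := by
    simp only [mul_apply, ← sum_add_distrib, ← add_mul, add_sub_cancel]
  have hexcess (i : Fin M) : ∑ m, (A i m - w m) = s := by
    rw [sum_sub_distrib, sum_row_of_mem_rowStochastic hA i]
  have hupper : ∑ m, (A i₁ m - w m) * B m j ≤ s * B mmax j := by
    rw [← hexcess i₁, sum_mul]
    exact sum_le_sum fun m _ => mul_le_mul_of_nonneg_left (hmax m) (sub_nonneg.2 (min_le_left _ _))
  have hlower : s * B mmin j ≤ ∑ m, (A i₂ m - w m) * B m j := by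
    rw [← hexcess i₂, sum_mul]
    exact sum_le_sum fun m _ => mul_le_mul_of_nonneg_left (hmin m) (sub_nonneg.2 (min_le_right _ _))
  have hs : 0 ≤ s := hexcess i₁ ▸ sum_nonneg fun m _ => sub_nonneg.2 (min_le_left _ _)
  calc (A * B) i₁ j - (A * B) i₂ j ≤ s * (B mmax j - B mmin j) := by
        rw [hsplit, hsplit, mul_sub]; linarith
    _ ≤ s * ergDelta B := mul_le_mul_of_nonneg_left (sub_le_ergDelta B j mmax mmin) hs

lemma ergDelta_mul_le (hA : A ∈ rowStochastic ℝ (Fin M)) (B : Matrix (Fin M) (Fin M) ℝ) :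
    ergDelta (A * B) ≤ ergLambda A * ergDelta B :=
  ergDelta_le (mul_nonneg (ergLambda_nonneg hA) (ergDelta_nonneg B)) fun j i₁ i₂ =>
    (mul_apply_sub_mul_apply_le hA B i₁ i₂ j).trans <|
      mul_le_mul_of_nonneg_right (one_sub_sum_min_le_ergLambda A i₁ i₂) (ergDelta_nonneg B)

lemma ergDelta_mul_le_ergDelta (hA : A ∈ rowStochastic ℝ (Fin M))
    (B : Matrix (Fin M) (Fin M) ℝ) :
    ergDelta (A * B) ≤ ergDelta B :=
  (ergDelta_mul_le hA B).trans <| mul_le_of_le_one_left (ergDelta_nonneg B) (ergLambda_le_one hA)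

end Hajnal

lemma ergDelta_backProdIco_le {M : ℕ} {Y : ℕ → Matrix (Fin M) (Fin M) ℝ} {p q r s : ℕ}
    (hpq : p ≤ q) (hqr : q ≤ r) (hrs : r ≤ s)
    (hY : ∀ n, p ≤ n → n < s → Y n ∈ rowStochastic ℝ (Fin M)) :
    ergDelta (backProdIco Y p s) ≤
      ergLambda (backProdIco Y q r) * ergDelta (backProdIco Y p q) := by
  rw [← backProdIco_mul_backProdIco Y (hpq.trans hqr) hrs,
    ← backProdIco_mul_backProdIco Y hpq hqr]
  calc _ ≤ ergDelta (backProdIco Y q r * backProdIco Y p q) :=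
        ergDelta_mul_le_ergDelta (backProdIco_mem fun n hrn hns => hY n (by omega) hns) _
    _ ≤ _ := ergDelta_mul_le (backProdIco_mem fun n hqn hnr => hY n (by omega) (by omega)) _

theorem ergDelta_backProd_le_general {M : ℕ}
    (Y : ℕ → Matrix (Fin M) (Fin M) ℝ) (t₀ t : ℕ)
    (hY : ∀ r, t₀ ≤ r → r ≤ t → RowStochastic (Y r))
    (γ : ℝ)
    (k : ℕ) (a b : Fin k → ℕ)
    (hlo : ∀ i, t₀ ≤ a i) (hab : ∀ i, a i ≤ b i) (hhi : ∀ i, b i ≤ t)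
    (hdisj : ∀ i j, i ≠ j → b i < a j ∨ b j < a i)
    (hblock : ∀ i, ergLambda (backProd Y (a i) (b i)) ≤ 1 - γ) :
    ergDelta (backProd Y t₀ t) ≤ (1 - γ) ^ k := by
  have hY' (r : ℕ) (hr : t₀ ≤ r) (hrt : r < t + 1) : Y r ∈ rowStochastic ℝ (Fin M) :=
    rowStochastic_iff_mem.1 (hY r hr (Nat.le_of_lt_succ hrt))
  -- Peel off the interval ending last: everything after it only shrinks `δ`, it contributes a
  -- factor `1 - γ`, and all other intervals lie before it.
  suffices key : ∀ S : Finset (Fin k), ∀ u ≤ t + 1, (∀ i ∈ S, b i < u) →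
      ergDelta (backProdIco Y t₀ u) ≤ (1 - γ) ^ #S by
    simpa [backProd_eq_backProdIco] using
      key univ (t + 1) le_rfl fun i _ => Nat.lt_succ_of_le (hhi i)
  intro S
  induction S using Finset.induction_on_max_value b with
  | empty =>
    exact fun u hu _ => by
      simpa using ergDelta_le_one (backProdIco_mem fun r hr hru => hY' r hr (by omega))
  | insert i S hiS hmax ih =>
    intro u hu hSu
    have hbi : b i < u := hSu i (mem_insert_self i S)
    have hbefore (x : Fin k) (hx : x ∈ S) : b x < a i :=
      (hdisj x i (ne_of_mem_of_not_mem hx hiS)).resolve_right fun h =>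
        (h.trans_le (hab x)).not_ge (hmax x hx)
    have hblock' := backProd_eq_backProdIco Y (a i) (b i) ▸ hblock i
    have hγ : 0 ≤ 1 - γ := (ergLambda_nonneg (backProdIco_mem fun r hr _ =>
      hY' r ((hlo i).trans hr) (by have := hhi i; omega))).trans hblock'
    rw [card_insert_of_notMem hiS, pow_succ']
    calc _ ≤ _ := ergDelta_backProdIco_le (hlo i) (Nat.le_succ_of_le (hab i)) hbi
          fun r hr hru => hY' r hr (by omega)
      _ ≤ (1 - γ) * (1 - γ) ^ #S :=
          mul_le_mul hblock' (ih (a i) (((hab i).trans_lt hbi).le.trans hu) hbefore)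
            (ergDelta_nonneg _) hγ

/-- If `Y(t₀), …, Y(t)` are row stochastic and there are `k` pairwise disjoint
intervals `[a i, b i] ⊆ [t₀, t]` of consecutive indices such that the backward
product of the `Y`'s over each interval has coefficient of ergodicity `λ` at most
`1 − γ`, then `δ(Y(t)·Y(t−1)·⋯·Y(t₀)) ≤ (1 − γ)^k`. -/
theorem ergDelta_backProd_le {M : ℕ} (hM : 0 < M)
    (Y : ℕ → Matrix (Fin M) (Fin M) ℝ) (t₀ t : ℕ) (ht : t₀ ≤ t)
    (hY : ∀ r, t₀ ≤ r → r ≤ t → RowStochastic (Y r))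
    (γ : ℝ) (hγ0 : 0 < γ) (hγ1 : γ ≤ 1)
    (k : ℕ) (a b : Fin k → ℕ)
    (hlo : ∀ i, t₀ ≤ a i) (hab : ∀ i, a i ≤ b i) (hhi : ∀ i, b i ≤ t)
    (hdisj : ∀ i j, i ≠ j → b i < a j ∨ b j < a i)
    (hblock : ∀ i, ergLambda (backProd Y (a i) (b i)) ≤ 1 - γ) :
    ergDelta (backProd Y t₀ t) ≤ (1 - γ) ^ k :=
  ergDelta_backProd_le_general Y t₀ t hY γ k a b hlo hab hhi hdisj hblock
end

section
/- Let f : ℝ^d → ℝ be differentiable, μ-strongly convex and have L-Lipschitz gradient with 0 < μ ≤ L, let w* be the global minimizer of f, and let the step size h satisfy 0 < h ≤ 2/(μ+L). Then for any w ∈ ℝ^d and any error vector e ∈ ℝ^d, the inexact gradient step w⁺ := w − h∇f(w) + e satisfies ‖w⁺ − w*‖ ≤ (1 − μh)·‖w − w*‖ + ‖e‖. -/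
/-!
Put `g := f - μ/2 ‖·‖²`. Then `g` is convex by assumption, and `(L-μ)/2 ‖·‖² - g = L/2 ‖·‖² - f`
is convex because `∇f` is `L`-Lipschitz. These two convexity facts make `∇g` cocoercive,
`‖∇g x - ∇g y‖² ≤ (L-μ) ⟪∇g x - ∇g y, x - y⟫`. Writing `∇f = ∇g + μ id` and expanding the square,
cocoercivity together with `h (μ+L) ≤ 2` shows that the exact gradient step `x ↦ x - h ∇f x` is
`(1-μh)`-Lipschitz. Since `∇f w* = 0`, the minimizer is a fixed point of that map, and the
error `e` enters through the triangle inequality.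
-/

open Set AffineMap
open scoped RealInnerProductSpace

section

variable {E : Type*} [NormedAddCommGroup E] [InnerProductSpace ℝ E]

theorem norm_sub_smul_le_of_cocoercive {u v : E} {μ L h : ℝ} (hμL : μ ≤ L) (hh0 : 0 ≤ h)
    (hh : h * (μ + L) ≤ 2) (hmono : 0 ≤ ⟪u - μ • v, v⟫)
    (hcoco : ‖u - μ • v‖ ^ 2 ≤ (L - μ) * ⟪u - μ • v, v⟫) :
    ‖v - h • u‖ ≤ (1 - μ * h) * ‖v‖ := by
  set q := u - μ • v
  have hfactor : 0 ≤ 1 - μ * h := by nlinarith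
  have hsplit : v - h • u = (1 - μ * h) • v - h • q := by simp only [q]; module
  rw [← sq_le_sq₀ (norm_nonneg _) (mul_nonneg hfactor (norm_nonneg _)), hsplit,
    norm_sub_sq_real, norm_smul, norm_smul, real_inner_smul_left, real_inner_smul_right,
    real_inner_comm, Real.norm_of_nonneg hfactor, Real.norm_of_nonneg hh0]
  have hstep : h * (L - μ) ≤ 2 * (1 - μ * h) := by linarith
  nlinarith [mul_le_mul_of_nonneg_left hcoco (sq_nonneg h),
    mul_le_mul_of_nonneg_right hstep (mul_nonneg hh0 hmono)]

variable [CompleteSpace E] {f : E → ℝ} {x y : E}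

theorem HasGradientAt.const_mul_norm_sq_sub {f' : E} (hf : HasGradientAt f f' x) (c : ℝ) :
    HasGradientAt (fun z => c / 2 * ‖z‖ ^ 2 - f z) (c • x - f') x := by
  rw [hasGradientAt_iff_hasFDerivAt] at hf ⊢
  refine (((hasStrictFDerivAt_norm_sq x).hasFDerivAt.const_mul (c / 2)).sub hf).congr_fderiv ?_
  ext v
  simp only [sub_apply, smul_apply, coe_innerSL_apply, nsmul_eq_mul, Nat.cast_ofNat, smul_eq_mul,
    InnerProductSpace.toDual_apply_apply, map_sub, map_smul, sub_left_inj]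
  ring

theorem HasGradientAt.sub_const_mul_norm_sq {f' : E} (hf : HasGradientAt f f' x) (c : ℝ) :
    HasGradientAt (fun z => f z - c / 2 * ‖z‖ ^ 2) (f' - c • x) x := by
  rw [hasGradientAt_iff_hasFDerivAt] at hf ⊢
  refine (hf.sub ((hasStrictFDerivAt_norm_sq x).hasFDerivAt.const_mul (c / 2))).congr_fderiv ?_
  ext v
  simp only [sub_apply, InnerProductSpace.toDual_apply_apply, smul_apply, coe_innerSL_apply,
    nsmul_eq_mul, Nat.cast_ofNat, smul_eq_mul, map_sub, map_smul, sub_right_inj]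
  ring

theorem HasGradientAt.hasDerivAt_comp_lineMap {f' : E} {t : ℝ}
    (hf : HasGradientAt f f' (lineMap x y t : E)) :
    HasDerivAt (f ∘ (lineMap x y : ℝ → E)) ⟪f', y - x⟫ t := by
  rw [hasGradientAt_iff_hasFDerivAt] at hf
  simpa using hf.comp_hasDerivAt t hasDerivAt_lineMap

theorem ConvexOn.add_inner_le_of_hasGradientAt {f' : E} (hf : ConvexOn ℝ univ f)
    (hx : HasGradientAt f f' x) (y : E) : f x + ⟪f', y - x⟫ ≤ f y := by
  have hline : ConvexOn ℝ univ (f ∘ (lineMap x y : ℝ → E)) := by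
    simpa using hf.comp_affineMap (lineMap x y)
  have hslope := hline.le_slope_of_hasDerivAt (mem_univ 0) (mem_univ 1) one_pos
    (HasGradientAt.hasDerivAt_comp_lineMap (by simpa using hx))
  simp only [slope_def_field, Function.comp_apply, lineMap_apply_one, lineMap_apply_zero,
    sub_zero, div_one] at hslope
  linarith

theorem ConvexOn.inner_sub_nonneg_of_hasGradientAt {gx gy : E} (hf : ConvexOn ℝ univ f)
    (hx : HasGradientAt f gx x) (hy : HasGradientAt f gy y) : 0 ≤ ⟪gx - gy, x - y⟫ := by
  have h₁ := hf.add_inner_le_of_hasGradientAt hx y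
  have h₂ := hf.add_inner_le_of_hasGradientAt hy x
  rw [← neg_sub x y, inner_neg_right] at h₁
  rw [inner_sub_left]
  linarith

theorem convexOn_univ_of_inner_sub_nonneg {f' : E → E} (hf : ∀ z, HasGradientAt f (f' z) z)
    (hmono : ∀ x y, 0 ≤ ⟪f' x - f' y, x - y⟫) : ConvexOn ℝ univ f := by
  refine ⟨convex_univ, fun x _ y _ a b ha hb hab => ?_⟩
  have hline (t : ℝ) : HasDerivAt (f ∘ (lineMap x y : ℝ → E)) ⟪f' (lineMap x y t), y - x⟫ t :=
    (hf _).hasDerivAt_comp_lineMap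
  have hderiv_mono : Monotone (deriv (f ∘ (lineMap x y : ℝ → E))) := by
    intro s t hst
    simp only [(hline _).deriv]
    have key := hmono (lineMap x y t) (lineMap x y s)
    have hdiff : lineMap x y t - lineMap x y s = (t - s) • (y - x) := by
      simp only [lineMap_apply_module']
      module
    rw [hdiff, real_inner_smul_right, inner_sub_left] at key
    rcases hst.eq_or_lt with rfl | hlt
    · rfl
    · nlinarith
  have hconv := (hderiv_mono.convexOn_univ_of_deriv fun t => (hline t).differentiableAt).2
    (mem_univ 0) (mem_univ 1) ha hb hab
  obtain rfl : a = 1 - b := by linarith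
  simpa [lineMap_apply_module] using hconv

theorem convexOn_univ_half_mul_norm_sq_sub {f' : E → E} {L : ℝ}
    (hf : ∀ z, HasGradientAt f (f' z) z) (hlip : ∀ x y, ‖f' x - f' y‖ ≤ L * ‖x - y‖) :
    ConvexOn ℝ univ fun z => L / 2 * ‖z‖ ^ 2 - f z := by
  refine convexOn_univ_of_inner_sub_nonneg (fun z => (hf z).const_mul_norm_sq_sub L) fun x y => ?_
  have hcs : ⟪f' x - f' y, x - y⟫ ≤ L * ‖x - y‖ * ‖x - y‖ :=
    (real_inner_le_norm _ _).trans (mul_le_mul_of_nonneg_right (hlip x y) (norm_nonneg _))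
  have hexpand : L • x - f' x - (L • y - f' y) = L • (x - y) - (f' x - f' y) := by module
  rw [hexpand, inner_sub_left, real_inner_smul_left, real_inner_self_eq_norm_mul_norm]
  linarith

theorem ConvexOn.le_add_inner_add_norm_sq_of_hasGradientAt {K : ℝ} {f' : E}
    (hψ : ConvexOn ℝ univ fun z => K / 2 * ‖z‖ ^ 2 - f z) (hy : HasGradientAt f f' y) (z : E) :
    f z ≤ f y + ⟪f', z - y⟫ + K / 2 * ‖z - y‖ ^ 2 := by
  have htangent := hψ.add_inner_le_of_hasGradientAt (hy.const_mul_norm_sq_sub K) z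
  simp only [inner_sub_left, inner_sub_right, real_inner_smul_left, real_inner_self_eq_norm_sq]
    at htangent
  rw [norm_sub_sq_real, inner_sub_right, real_inner_comm y z]
  linarith

section Cocoercive

variable {K : ℝ} (hf : ConvexOn ℝ univ f) (hψ : ConvexOn ℝ univ fun z => K / 2 * ‖z‖ ^ 2 - f z)
include hf hψ

/-- Compare `f` at `z = y - t (gy - gx)` with its tangent plane at `x` (from below) and with its
quadratic upper bound at `y` (from above). -/
theorem add_inner_add_mul_norm_sq_le {gx gy : E} (hx : HasGradientAt f gx x)
    (hy : HasGradientAt f gy y) (t : ℝ) :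
    f x + ⟪gx, y - x⟫ + (t - K / 2 * t ^ 2) * ‖gy - gx‖ ^ 2 ≤ f y := by
  set z := y - t • (gy - gx)
  have hlow := hf.add_inner_le_of_hasGradientAt hx z
  have hup := hψ.le_add_inner_add_norm_sq_of_hasGradientAt hy z
  have hzx : z - x = (y - x) - t • (gy - gx) := by module
  have hzy : z - y = -(t • (gy - gx)) := by module
  rw [hzx, inner_sub_right, real_inner_smul_right] at hlow
  rw [hzy, inner_neg_right, real_inner_smul_right, norm_neg, norm_smul, mul_pow,
    Real.norm_eq_abs, sq_abs] at hup
  have hgap : ⟪gy, gy - gx⟫ - ⟪gx, gy - gx⟫ = ‖gy - gx‖ ^ 2 := by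
    rw [← inner_sub_left, real_inner_self_eq_norm_sq]
  linear_combination hlow + hup - t * hgap

theorem norm_sub_sq_le_mul_inner_of_hasGradientAt {gx gy : E} (hK : 0 ≤ K)
    (hx : HasGradientAt f gx x) (hy : HasGradientAt f gy y) :
    ‖gx - gy‖ ^ 2 ≤ K * ⟪gx - gy, x - y⟫ := by
  have hgap (t : ℝ) : (2 * t - K * t ^ 2) * ‖gx - gy‖ ^ 2 ≤ ⟪gx - gy, x - y⟫ := by
    have h₁ := add_inner_add_mul_norm_sq_le hf hψ hx hy t
    have h₂ := add_inner_add_mul_norm_sq_le hf hψ hy hx t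
    rw [norm_sub_rev] at h₁
    have hinner : ⟪gx - gy, x - y⟫ = -⟪gx, y - x⟫ - ⟪gy, x - y⟫ := by
      rw [inner_sub_left, ← neg_sub x y, inner_neg_right]; ring
    linarith
  -- optimise over `t`: `t = 1/K`, or `t → ∞` when `K = 0`
  rcases hK.eq_or_lt with rfl | hKpos
  · by_contra! hpos
    rw [zero_mul] at hpos
    have h₀ := hgap 0
    have h₁ := hgap ((⟪gx - gy, x - y⟫ + 1) / ‖gx - gy‖ ^ 2)
    rw [zero_mul, sub_zero, mul_assoc, div_mul_cancel₀ _ hpos.ne'] at h₁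
    linarith
  · have h := hgap K⁻¹
    rwa [show 2 * K⁻¹ - K * K⁻¹ ^ 2 = K⁻¹ by field_simp; ring, inv_mul_le_iff₀ hKpos] at h

end Cocoercive

theorem norm_sub_smul_gradient_sub_le {μ L h : ℝ} (hdiff : Differentiable ℝ f)
    (hsc : ConvexOn ℝ univ fun x => f x - μ / 2 * ‖x‖ ^ 2)
    (hlip : ∀ x y, ‖gradient f x - gradient f y‖ ≤ L * ‖x - y‖)
    (hμL : μ ≤ L) (hh0 : 0 ≤ h) (hh : h * (μ + L) ≤ 2) (x y : E) :
    ‖x - h • gradient f x - (y - h • gradient f y)‖ ≤ (1 - μ * h) * ‖x - y‖ := by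
  have hgrad (z : E) : HasGradientAt f (gradient f z) z := (hdiff z).hasGradientAt
  have hψ : ConvexOn ℝ univ fun z => (L - μ) / 2 * ‖z‖ ^ 2 - (f z - μ / 2 * ‖z‖ ^ 2) := by
    convert convexOn_univ_half_mul_norm_sq_sub hgrad hlip using 2
    ring
  have hx := (hgrad x).sub_const_mul_norm_sq μ
  have hy := (hgrad y).sub_const_mul_norm_sq μ
  have hcoco := norm_sub_sq_le_mul_inner_of_hasGradientAt hsc hψ (sub_nonneg.mpr hμL) hx hy
  have hmono := hsc.inner_sub_nonneg_of_hasGradientAt hx hy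
  have hq : gradient f x - μ • x - (gradient f y - μ • y)
      = gradient f x - gradient f y - μ • (x - y) := by module
  rw [hq] at hcoco hmono
  have hsplit : x - h • gradient f x - (y - h • gradient f y)
      = x - y - h • (gradient f x - gradient f y) := by module
  rw [hsplit]
  exact norm_sub_smul_le_of_cocoercive hμL hh0 hh hmono hcoco

end

theorem inexact_gradient_step_contraction_general {d : ℕ} (μ L h : ℝ) (hμL : μ ≤ L)
    (hh0 : 0 < h) (hh : h ≤ 2 / (μ + L))
    (f : EuclideanSpace ℝ (Fin d) → ℝ)
    (hdiff : Differentiable ℝ f)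
    (hsc : ConvexOn ℝ Set.univ (fun x => f x - μ / 2 * ‖x‖ ^ 2))
    (hlip : ∀ x y, ‖gradient f x - gradient f y‖ ≤ L * ‖x - y‖)
    (wstar : EuclideanSpace ℝ (Fin d)) (hmin : ∀ z, f wstar ≤ f z)
    (w e : EuclideanSpace ℝ (Fin d)) :
    ‖w - h • gradient f w + e - wstar‖ ≤ (1 - μ * h) * ‖w - wstar‖ + ‖e‖ := by
  have hsum : 0 < μ + L := by
    by_contra! hle
    linarith [div_nonpos_of_nonneg_of_nonpos zero_le_two hle]
  have hstep : h * (μ + L) ≤ 2 := (le_div_iff₀ hsum).mp hh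
  have hcrit : gradient f wstar = 0 := by
    have hfd : fderiv ℝ f wstar = 0 := IsLocalMin.fderiv_eq_zero (.of_forall hmin)
    simp [gradient, hfd]
  calc ‖w - h • gradient f w + e - wstar‖
      = ‖(w - h • gradient f w - (wstar - h • gradient f wstar)) + e‖ := by
        rw [hcrit]; congr 1; module
    _ ≤ ‖w - h • gradient f w - (wstar - h • gradient f wstar)‖ + ‖e‖ := norm_add_le _ _
    _ ≤ (1 - μ * h) * ‖w - wstar‖ + ‖e‖ := by
        gcongr
        exact norm_sub_smul_gradient_sub_le hdiff hsc hlip hμL hh0.le hstep w wstar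

/-- Inexact gradient step for strongly convex smooth functions: if `f : ℝ^d → ℝ` is
differentiable, `μ`-strongly convex with `L`-Lipschitz gradient (`0 < μ ≤ L`), `w*`
is a global minimizer of `f` and `0 < h ≤ 2/(μ+L)`, then the inexact update
`w⁺ = w − h∇f(w) + e` satisfies `‖w⁺ − w*‖ ≤ (1 − μh)‖w − w*‖ + ‖e‖`. -/
theorem inexact_gradient_step_contraction {d : ℕ} (μ L h : ℝ) (hμ : 0 < μ) (hμL : μ ≤ L)
    (hh0 : 0 < h) (hh : h ≤ 2 / (μ + L))
    (f : EuclideanSpace ℝ (Fin d) → ℝ)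
    (hdiff : Differentiable ℝ f)
    (hsc : ConvexOn ℝ Set.univ (fun x => f x - μ / 2 * ‖x‖ ^ 2))
    (hlip : ∀ x y, ‖gradient f x - gradient f y‖ ≤ L * ‖x - y‖)
    (wstar : EuclideanSpace ℝ (Fin d)) (hmin : ∀ z, f wstar ≤ f z)
    (w e : EuclideanSpace ℝ (Fin d)) :
    ‖w - h • gradient f w + e - wstar‖ ≤ (1 - μ * h) * ‖w - wstar‖ + ‖e‖ :=
  inexact_gradient_step_contraction_general μ L h hμL hh0 hh f hdiff hsc hlip wstar hmin w e
end

section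
/- Let f : ℝ^d → ℝ be differentiable with L-Lipschitz gradient (L > 0), bounded below with f* := inf f, and satisfying the Polyak–Łojasiewicz inequality with parameter μ > 0. Let h ∈ (0, 2/L), let w, e ∈ ℝ^d, and set w⁺ := w − h∇f(w) + e. Suppose G ≥ 0 is such that ‖∇f(x)‖ ≤ G for every x on the line segment joining w − h∇f(w) and w⁺. Then f(w⁺) − f* ≤ (1 − μh(2 − Lh))·(f(w) − f*) + G·‖e‖. -/
/-!
The smoothness (descent) inequality `f (x + v) ≤ f x + ⟪∇f x, v⟫ + L/2 ‖v‖²` applied to the exact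
step `v = -h∇f(w)` decreases `f` by `h (1 - L h / 2) ‖∇f(w)‖²`, which the PL inequality bounds below
by `μ h (2 - L h) (f(w) - f*)`. The error `e` then costs at most `G ‖e‖` by the mean value
inequality on the segment from the exact step to `w⁺`.
-/

open InnerProductSpace Set

section NormedSpace

variable {E : Type*} [NormedAddCommGroup E] [NormedSpace ℝ E] {f : E → ℝ} {L : ℝ}

theorem hasDerivAt_comp_add_smul (hf : Differentiable ℝ f) (x v : E) (t : ℝ) :
    HasDerivAt (fun s : ℝ => f (x + s • v)) (fderiv ℝ f (x + t • v) v) t := by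
  have hline : HasDerivAt (fun s : ℝ => x + s • v) v t := by
    simpa using ((hasDerivAt_id t).smul_const v).const_add x
  exact (hf _).hasFDerivAt.comp_hasDerivAt t hline

theorem le_add_fderiv_add_of_lipschitz_fderiv (hf : Differentiable ℝ f)
    (hlip : ∀ x y, ‖fderiv ℝ f x - fderiv ℝ f y‖ ≤ L * ‖x - y‖) (x v : E) :
    f (x + v) ≤ f x + fderiv ℝ f x v + L / 2 * ‖v‖ ^ 2 := by
  -- `φ 0 = 0` and `φ` is monotone on `[0, ∞)`, since `φ' t ≥ L t ‖v‖² - ‖Df(x+tv) - Df x‖ ‖v‖ ≥ 0`.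
  set φ : ℝ → ℝ := fun t => f x + t * fderiv ℝ f x v + L / 2 * t ^ 2 * ‖v‖ ^ 2 - f (x + t • v)
  have hφ : ∀ t, HasDerivAt φ (fderiv ℝ f x v + L * t * ‖v‖ ^ 2 - fderiv ℝ f (x + t • v) v) t := by
    intro t
    have := (((hasDerivAt_id t).mul_const (fderiv ℝ f x v)).const_add (f x)).add
      (((hasDerivAt_pow 2 t).const_mul (L / 2)).mul_const (‖v‖ ^ 2)) |>.sub
      (hasDerivAt_comp_add_smul hf x v t)
    exact this.congr_deriv (by ring)
  have hφ' : ∀ t ∈ interior (Ici (0 : ℝ)),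
      0 ≤ fderiv ℝ f x v + L * t * ‖v‖ ^ 2 - fderiv ℝ f (x + t • v) v := by
    intro t ht
    rw [interior_Ici, mem_Ioi] at ht
    set D := fderiv ℝ f (x + t • v) - fderiv ℝ f x
    have := calc fderiv ℝ f (x + t • v) v - fderiv ℝ f x v = D v := rfl
      _ ≤ ‖D‖ * ‖v‖ := (le_abs_self _).trans (D.le_opNorm v)
      _ ≤ L * ‖t • v‖ * ‖v‖ := by
          gcongr
          simpa using hlip (x + t • v) x
      _ = L * t * ‖v‖ ^ 2 := by rw [norm_smul, Real.norm_of_nonneg ht.le]; ring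
    linarith
  have hmono : MonotoneOn φ (Ici 0) :=
    monotoneOn_of_hasDerivWithinAt_nonneg (convex_Ici 0)
      (fun t _ => (hφ t).continuousAt.continuousWithinAt)
      (fun t _ => (hφ t).hasDerivWithinAt) hφ'
  simpa [φ] using hmono self_mem_Ici (show (1 : ℝ) ∈ Ici 0 by norm_num) zero_le_one

end NormedSpace

section InnerProductSpace

variable {F : Type*} [NormedAddCommGroup F] [InnerProductSpace ℝ F] [CompleteSpace F]
  {f : F → ℝ} {L : ℝ}

theorem le_add_inner_gradient_add_of_lipschitz_gradient (hf : Differentiable ℝ f)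
    (hlip : ∀ x y, ‖gradient f x - gradient f y‖ ≤ L * ‖x - y‖) (x v : F) :
    f (x + v) ≤ f x + inner ℝ (gradient f x) v + L / 2 * ‖v‖ ^ 2 := by
  rw [inner_gradient_left]
  refine le_add_fderiv_add_of_lipschitz_fderiv hf (fun x y => ?_) x v
  rw [← toDual_gradient, ← toDual_gradient, ← map_sub, LinearIsometryEquiv.norm_map]
  exact hlip x y

theorem le_sub_of_gradient_step (hf : Differentiable ℝ f)
    (hlip : ∀ x y, ‖gradient f x - gradient f y‖ ≤ L * ‖x - y‖) (w : F) (h : ℝ) :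
    f (w - h • gradient f w) ≤ f w - h * (1 - L * h / 2) * ‖gradient f w‖ ^ 2 := by
  have := le_add_inner_gradient_add_of_lipschitz_gradient hf hlip w (-(h • gradient f w))
  rw [← sub_eq_add_neg, inner_neg_right, real_inner_smul_right, real_inner_self_eq_norm_sq,
    norm_neg, norm_smul, mul_pow, Real.norm_eq_abs, sq_abs] at this
  linarith

theorem sub_le_of_gradient_step_of_pl {μ : ℝ} (hμ : 0 < μ) (hf : Differentiable ℝ f)
    (hlip : ∀ x y, ‖gradient f x - gradient f y‖ ≤ L * ‖x - y‖) (m : ℝ) (w : F)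
    (hpl : f w - m ≤ 1 / (2 * μ) * ‖gradient f w‖ ^ 2) {h : ℝ} (hh0 : 0 ≤ h) (hLh : L * h ≤ 2) :
    f (w - h • gradient f w) - m ≤ (1 - μ * h * (2 - L * h)) * (f w - m) := by
  have hgrad : 2 * μ * (f w - m) ≤ ‖gradient f w‖ ^ 2 := by
    rw [one_div_mul_eq_div, le_div_iff₀ (by positivity)] at hpl
    linarith
  have hstep : 0 ≤ h * (1 - L * h / 2) := mul_nonneg hh0 (by linarith)
  linarith [le_sub_of_gradient_step hf hlip w h, mul_le_mul_of_nonneg_left hgrad hstep]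

theorem sub_le_mul_norm_of_norm_gradient_le_on_segment {G : ℝ} {y e : F}
    (hf : ∀ x ∈ segment ℝ y (y + e), DifferentiableAt ℝ f x)
    (hG : ∀ x ∈ segment ℝ y (y + e), ‖gradient f x‖ ≤ G) :
    f (y + e) - f y ≤ G * ‖e‖ := by
  have := (convex_segment y (y + e)).norm_image_sub_le_of_norm_fderiv_le hf
    (fun x hx => by rw [← toDual_gradient, LinearIsometryEquiv.norm_map]; exact hG x hx)
    (left_mem_segment ℝ y (y + e)) (right_mem_segment ℝ y (y + e))
  rw [add_sub_cancel_left] at this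
  exact (le_abs_self _).trans this

end InnerProductSpace

theorem pl_inexact_gradient_descent_decrease_general {d : ℕ} (L μ : ℝ) (hL : 0 < L) (hμ : 0 < μ)
    (f : EuclideanSpace ℝ (Fin d) → ℝ)
    (hdiff : Differentiable ℝ f)
    (hlip : ∀ x y, ‖gradient f x - gradient f y‖ ≤ L * ‖x - y‖)
    (hpl : ∀ w, f w - (⨅ x, f x) ≤ 1 / (2 * μ) * ‖gradient f w‖ ^ 2)
    (h : ℝ) (hh0 : 0 < h) (hh : h < 2 / L)
    (w e : EuclideanSpace ℝ (Fin d))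
    (G : ℝ)
    (hseg : ∀ x ∈ segment ℝ (w - h • gradient f w) (w - h • gradient f w + e),
      ‖gradient f x‖ ≤ G) :
    f (w - h • gradient f w + e) - (⨅ x, f x) ≤
      (1 - μ * h * (2 - L * h)) * (f w - (⨅ x, f x)) + G * ‖e‖ := by
  have hLh : L * h ≤ 2 := by
    rw [mul_comm]
    exact ((lt_div_iff₀ hL).mp hh).le
  have hexact := sub_le_of_gradient_step_of_pl hμ hdiff hlip _ w (hpl w) hh0.le hLh
  have herror := sub_le_mul_norm_of_norm_gradient_le_on_segment (fun x _ => hdiff x) hseg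
  linarith

/-- Inexact gradient descent on Polyak–Łojasiewicz functions: if `f : ℝ^d → ℝ` is
differentiable with `L`-Lipschitz gradient (`L > 0`), bounded below with
`f* := inf f`, satisfies the PL inequality with parameter `μ > 0`, `h ∈ (0, 2/L)`,
`w⁺ := w − h∇f(w) + e`, and `‖∇f(x)‖ ≤ G` on the segment joining `w − h∇f(w)` and
`w⁺`, then `f(w⁺) − f* ≤ (1 − μh(2 − Lh))·(f(w) − f*) + G‖e‖`. -/
theorem pl_inexact_gradient_descent_decrease {d : ℕ} (L μ : ℝ) (hL : 0 < L) (hμ : 0 < μ)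
    (f : EuclideanSpace ℝ (Fin d) → ℝ)
    (hdiff : Differentiable ℝ f)
    (hlip : ∀ x y, ‖gradient f x - gradient f y‖ ≤ L * ‖x - y‖)
    (hbdd : BddBelow (Set.range f))
    (hpl : ∀ w, f w - (⨅ x, f x) ≤ 1 / (2 * μ) * ‖gradient f w‖ ^ 2)
    (h : ℝ) (hh0 : 0 < h) (hh : h < 2 / L)
    (w e : EuclideanSpace ℝ (Fin d))
    (G : ℝ) (hG : 0 ≤ G)
    (hseg : ∀ x ∈ segment ℝ (w - h • gradient f w) (w - h • gradient f w + e),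
      ‖gradient f x‖ ≤ G) :
    f (w - h • gradient f w + e) - (⨅ x, f x) ≤
      (1 - μ * h * (2 - L * h)) * (f w - (⨅ x, f x)) + G * ‖e‖ :=
  pl_inexact_gradient_descent_decrease_general L μ hL hμ f hdiff hlip hpl h hh0 hh w e G hseg
end

section
/- Let f : ℝ^d → ℝ be differentiable with L-Lipschitz gradient (L > 0) and bounded below. Let S ≥ 1 and let w₀, …, w_S ∈ ℝ^d satisfy w_{s+1} = w_s − h_s∇f(w_s) + e_s for 0 ≤ s ≤ S−1, where the step sizes satisfy 0 < h_s ≤ 1/(2L). Suppose G ≥ 0 is such that ‖∇f(w_s)‖ ≤ G for all 0 ≤ s ≤ S−1. Then (1/2)·(min_{0 ≤ s ≤ S−1}‖∇f(w_s)‖²)·∑_{s=0}^{S−1} h_s ≤ f(w₀) − inf f + ∑_{s=0}^{S−1}(G·‖e_s‖ + L·‖e_s‖²). -/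
/-!
Along the segment from `x` to `x + v` the Lipschitz bound on the gradient gives the descent
lemma `f (x + v) ≤ f x + ⟪∇f x, v⟫ + L/2 ‖v‖²`. For an inexact step `v = e - h ∇f x` with
`L h ≤ 1/2`, the quadratic term absorbs half of the decrease `h ‖∇f x‖²`, while the error
costs at most `G ‖e‖ + L ‖e‖²`. Summing over the steps telescopes `f`, and `f (w S) ≥ inf f`.
-/

open scoped RealInnerProductSpace

section Descent

variable {F : Type*} [NormedAddCommGroup F] [InnerProductSpace ℝ F] [CompleteSpace F]
  {f : F → ℝ} {L : ℝ}

theorem hasDerivAt_apply_add_smul {x v : F} {t : ℝ} (hf : DifferentiableAt ℝ f (x + t • v)) :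
    HasDerivAt (fun t : ℝ => f (x + t • v)) ⟪gradient f (x + t • v), v⟫ t := by
  have hline : HasDerivAt (fun t : ℝ => x + t • v) v t := by
    simpa using ((hasDerivAt_id t).smul_const v).const_add x
  exact hf.hasGradientAt.hasFDerivAt.comp_hasDerivAt t hline

theorem inner_gradient_add_smul_sub_le (hlip : ∀ x y, ‖gradient f x - gradient f y‖ ≤ L * ‖x - y‖)
    (x v : F) {t : ℝ} (ht : 0 ≤ t) :
    ⟪gradient f (x + t • v) - gradient f x, v⟫ ≤ L * t * ‖v‖ ^ 2 :=
  calc ⟪gradient f (x + t • v) - gradient f x, v⟫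
      ≤ ‖gradient f (x + t • v) - gradient f x‖ * ‖v‖ := real_inner_le_norm _ _
    _ ≤ L * ‖(x + t • v) - x‖ * ‖v‖ := by gcongr; exact hlip _ _
    _ = L * t * ‖v‖ ^ 2 := by
      rw [add_sub_cancel_left, norm_smul, Real.norm_of_nonneg ht]; ring

theorem apply_add_le_of_lipschitz_gradient (hf : Differentiable ℝ f)
    (hlip : ∀ x y, ‖gradient f x - gradient f y‖ ≤ L * ‖x - y‖) (x v : F) :
    f (x + v) ≤ f x + ⟪gradient f x, v⟫ + L / 2 * ‖v‖ ^ 2 := by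
  set φ : ℝ → ℝ := fun t => f (x + t • v) - t * ⟪gradient f x, v⟫ - L / 2 * t ^ 2 * ‖v‖ ^ 2
  have hφ : ∀ t : ℝ, HasDerivAt φ
      (⟪gradient f (x + t • v), v⟫ - ⟪gradient f x, v⟫ - L * t * ‖v‖ ^ 2) t := fun t => by
    have hlin : HasDerivAt (fun t : ℝ => t * ⟪gradient f x, v⟫) ⟪gradient f x, v⟫ t := by
      simpa using (hasDerivAt_id t).mul_const ⟪gradient f x, v⟫
    have hquad : HasDerivAt (fun t : ℝ => L / 2 * t ^ 2 * ‖v‖ ^ 2) (L * t * ‖v‖ ^ 2) t := by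
      refine (((hasDerivAt_pow 2 t).const_mul (L / 2)).mul_const (‖v‖ ^ 2)).congr_deriv ?_
      ring
    exact ((hasDerivAt_apply_add_smul (hf _)).sub hlin).sub hquad
  have hanti : AntitoneOn φ (Set.Icc 0 1) := by
    refine antitoneOn_of_deriv_nonpos (convex_Icc 0 1)
      (HasDerivAt.continuousOn fun t _ => hφ t)
      (fun t _ => (hφ t).differentiableAt.differentiableWithinAt) fun t ht => ?_
    rw [interior_Icc] at ht
    have := inner_gradient_add_smul_sub_le hlip x v ht.1.le
    rw [inner_sub_left] at this
    rw [(hφ t).deriv]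
    linarith
  have h01 : φ 1 ≤ φ 0 := hanti (by norm_num) (by norm_num) zero_le_one
  simp only [φ, one_smul, zero_smul, add_zero, one_mul, zero_mul, one_pow, mul_one,
    zero_pow two_ne_zero, mul_zero, sub_zero] at h01
  linarith

end Descent

theorem inner_add_sq_norm_sub_smul_le {F : Type*} [NormedAddCommGroup F] [InnerProductSpace ℝ F]
    {g e : F} {h L G : ℝ} (hh : 0 ≤ h) (hL : 0 ≤ L) (hLh : L * h ≤ 1 / 2) (hg : ‖g‖ ≤ G) :
    ⟪g, e - h • g⟫ + L / 2 * ‖e - h • g‖ ^ 2 ≤ -(h / 2 * ‖g‖ ^ 2) + (G * ‖e‖ + L * ‖e‖ ^ 2) := by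
  have hinner : ⟪g, e - h • g⟫ ≤ G * ‖e‖ - h * ‖g‖ ^ 2 := by
    rw [inner_sub_right, real_inner_smul_right, real_inner_self_eq_norm_sq]
    have := (real_inner_le_norm g e).trans (mul_le_mul_of_nonneg_right hg (norm_nonneg e))
    linarith
  have hnorm : ‖e - h • g‖ ≤ ‖e‖ + h * ‖g‖ := by
    simpa [norm_smul, Real.norm_of_nonneg hh] using norm_sub_le e (h • g)
  have hsq : L / 2 * ‖e - h • g‖ ^ 2 ≤ L * ‖e‖ ^ 2 + h / 2 * ‖g‖ ^ 2 := by
    have hsq_norm : ‖e - h • g‖ ^ 2 ≤ 2 * ‖e‖ ^ 2 + 2 * (h * ‖g‖) ^ 2 := by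
      nlinarith [norm_nonneg (e - h • g), sq_nonneg (‖e‖ - h * ‖g‖)]
    have hLh_sq : L * (h * ‖g‖) ^ 2 ≤ h / 2 * ‖g‖ ^ 2 := by
      have := mul_le_mul_of_nonneg_right hLh (by positivity : 0 ≤ h * ‖g‖ ^ 2)
      linarith
    nlinarith
  linarith

theorem apply_inexact_gradient_step_le {F : Type*} [NormedAddCommGroup F]
    [InnerProductSpace ℝ F] [CompleteSpace F] {f : F → ℝ} {L h G : ℝ} (hL : 0 < L)
    (hf : Differentiable ℝ f) (hlip : ∀ x y, ‖gradient f x - gradient f y‖ ≤ L * ‖x - y‖)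
    (hh : 0 ≤ h) (hhL : h ≤ 1 / (2 * L)) {x : F} (e : F) (hG : ‖gradient f x‖ ≤ G) :
    f (x - h • gradient f x + e) ≤
      f x - h * (1 / 2 * ‖gradient f x‖ ^ 2) + (G * ‖e‖ + L * ‖e‖ ^ 2) := by
  have hLh : L * h ≤ 1 / 2 := by
    rw [le_div_iff₀ (by positivity)] at hhL
    linarith
  have hdesc := apply_add_le_of_lipschitz_gradient hf hlip x (e - h • gradient f x)
  have hstep := inner_add_sq_norm_sub_smul_le (e := e) hh hL.le hLh hG
  rw [show x + (e - h • gradient f x) = x - h • gradient f x + e by abel] at hdesc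
  linarith

theorem mul_sum_le_sub_add_sum_of_le_sub_add {S : ℕ} {m : ℝ} {a h u c : ℕ → ℝ}
    (hh : ∀ s < S, 0 ≤ h s) (hm : ∀ s < S, m ≤ a s)
    (hdec : ∀ s < S, h s * a s ≤ u s - u (s + 1) + c s) :
    m * ∑ s ∈ Finset.range S, h s ≤ u 0 - u S + ∑ s ∈ Finset.range S, c s := by
  rw [Finset.mul_sum, ← Finset.sum_range_sub' u, ← Finset.sum_add_distrib]
  refine Finset.sum_le_sum fun s hs => ?_
  rw [Finset.mem_range] at hs
  calc m * h s ≤ h s * a s := by rw [mul_comm]; exact mul_le_mul_of_nonneg_left (hm s hs) (hh s hs)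
    _ ≤ _ := hdec s hs

theorem inexact_gd_diminishing_step_bound_general {d : ℕ} (L : ℝ) (hL : 0 < L)
    (f : EuclideanSpace ℝ (Fin d) → ℝ)
    (hdiff : Differentiable ℝ f)
    (hlip : ∀ x y, ‖gradient f x - gradient f y‖ ≤ L * ‖x - y‖)
    (hbdd : BddBelow (Set.range f))
    (S : ℕ)
    (w e : ℕ → EuclideanSpace ℝ (Fin d)) (h : ℕ → ℝ)
    (hstep : ∀ s < S, 0 < h s ∧ h s ≤ 1 / (2 * L))
    (hupd : ∀ s < S, w (s + 1) = w s - h s • gradient f (w s) + e s)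
    (G : ℝ) (hGb : ∀ s < S, ‖gradient f (w s)‖ ≤ G) :
    1 / 2 * (⨅ s : Fin S, ‖gradient f (w s)‖ ^ 2) * (∑ s ∈ Finset.range S, h s) ≤
      f (w 0) - (⨅ x, f x) + ∑ s ∈ Finset.range S, (G * ‖e s‖ + L * ‖e s‖ ^ 2) := by
  have hmin : ∀ s < S, 1 / 2 * (⨅ s : Fin S, ‖gradient f (w s)‖ ^ 2) ≤
      1 / 2 * ‖gradient f (w s)‖ ^ 2 := fun s hs => by
    gcongr
    exact ciInf_le (Finite.bddBelow_range _) (⟨s, hs⟩ : Fin S)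
  have hdec : ∀ s < S, h s * (1 / 2 * ‖gradient f (w s)‖ ^ 2) ≤
      f (w s) - f (w (s + 1)) + (G * ‖e s‖ + L * ‖e s‖ ^ 2) := fun s hs => by
    have := apply_inexact_gradient_step_le hL hdiff hlip (hstep s hs).1.le (hstep s hs).2
      (e s) (hGb s hs)
    rw [hupd s hs]
    linarith
  have hinf : (⨅ x, f x) ≤ f (w S) := ciInf_le hbdd _
  linarith [mul_sum_le_sub_add_sum_of_le_sub_add (fun s hs => (hstep s hs).1.le) hmin hdec]

/-- Finite-horizon guarantee for inexact gradient descent with diminishing step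
sizes: if `f` is differentiable with `L`-Lipschitz gradient and bounded below,
`w_{s+1} = w_s − h_s∇f(w_s) + e_s` with `0 < h_s ≤ 1/(2L)` for `0 ≤ s ≤ S−1`, and
`‖∇f(w_s)‖ ≤ G`, then
`(1/2)·(min_{s<S}‖∇f(w_s)‖²)·∑_{s<S} h_s ≤ f(w₀) − inf f + ∑_{s<S}(G‖e_s‖ + L‖e_s‖²)`. -/
theorem inexact_gd_diminishing_step_bound {d : ℕ} (L : ℝ) (hL : 0 < L)
    (f : EuclideanSpace ℝ (Fin d) → ℝ)
    (hdiff : Differentiable ℝ f)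
    (hlip : ∀ x y, ‖gradient f x - gradient f y‖ ≤ L * ‖x - y‖)
    (hbdd : BddBelow (Set.range f))
    (S : ℕ) (hS : 1 ≤ S)
    (w e : ℕ → EuclideanSpace ℝ (Fin d)) (h : ℕ → ℝ)
    (hstep : ∀ s < S, 0 < h s ∧ h s ≤ 1 / (2 * L))
    (hupd : ∀ s < S, w (s + 1) = w s - h s • gradient f (w s) + e s)
    (G : ℝ) (hG : 0 ≤ G) (hGb : ∀ s < S, ‖gradient f (w s)‖ ≤ G) :
    1 / 2 * (⨅ s : Fin S, ‖gradient f (w s)‖ ^ 2) * (∑ s ∈ Finset.range S, h s) ≤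
      f (w 0) - (⨅ x, f x) + ∑ s ∈ Finset.range S, (G * ‖e s‖ + L * ‖e s‖ ^ 2) :=
  inexact_gd_diminishing_step_bound_general L hL f hdiff hlip hbdd S w e h hstep hupd G hGb
end

section
/- Let Q be a row stochastic M×M real matrix, and let c, c′ ∈ ℝ^M be stochastic vectors satisfying Qᵀc′ = c (equivalently (1c′ᵀ)·Q = 1cᵀ). Let η ≥ 0 satisfy |Q_{ji} − c_i| ≤ η for all indices j, i. Then for any x, t ∈ ℝ^M and any h ≥ 0, the vector x⁺ := Qx − h·t satisfies ‖(1c′ᵀ)x⁺ − x⁺‖ ≤ M^{3/2}·(√M + 1)·η·‖(1cᵀ)x − x‖ + h·(√M + 1)·‖(1cᵀ)t − t‖. -/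
/-- The Euclidean norm of a vector in `ℝ^M`. -/
noncomputable def evnorm {M : ℕ} (v : Fin M → ℝ) : ℝ :=
  Real.sqrt (∑ i, v i ^ 2)

/-- The rank-one matrix `1cᵀ`, all of whose rows equal `cᵀ`. -/
def rowMatrix {M : ℕ} (c : Fin M → ℝ) : Matrix (Fin M) (Fin M) ℝ :=
  Matrix.of fun _ i => c i

open Matrix

section
variable {M : ℕ}

lemma evnorm_eq_norm (v : Fin M → ℝ) : evnorm v = ‖WithLp.toLp 2 v‖ := by
  simp [evnorm, EuclideanSpace.norm_eq]

lemma evnorm_nonneg (v : Fin M → ℝ) : 0 ≤ evnorm v :=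
  Real.sqrt_nonneg _

lemma evnorm_sub_le (u v : Fin M → ℝ) : evnorm (u - v) ≤ evnorm u + evnorm v := by
  simpa only [evnorm_eq_norm, WithLp.toLp_sub] using norm_sub_le _ _

lemma evnorm_smul (a : ℝ) (v : Fin M → ℝ) : evnorm (a • v) = |a| * evnorm v := by
  simp only [evnorm_eq_norm, WithLp.toLp_smul, norm_smul, Real.norm_eq_abs]

lemma abs_dotProduct_le_evnorm_mul (u v : Fin M → ℝ) :
    |u ⬝ᵥ v| ≤ evnorm u * evnorm v := by
  simpa [evnorm_eq_norm, EuclideanSpace.inner_eq_star_dotProduct, dotProduct_comm]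
    using abs_real_inner_le_norm (WithLp.toLp 2 u) (WithLp.toLp 2 v)

lemma evnorm_le_evnorm_of_abs_le {u v : Fin M → ℝ} (h : ∀ i, |u i| ≤ v i) :
    evnorm u ≤ evnorm v :=
  Real.sqrt_le_sqrt <| Finset.sum_le_sum fun i _ =>
    sq_le_sq' (neg_le_of_abs_le (h i)) (le_of_abs_le (h i))

lemma evnorm_const (a : ℝ) : evnorm (fun _ : Fin M => a) = √M * |a| := by
  simp [evnorm, Real.sqrt_mul, Real.sqrt_sq_eq_abs]

lemma evnorm_le_one_of_stochastic {c : Fin M → ℝ} (hc0 : ∀ i, 0 ≤ c i)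
    (hc1 : ∑ i, c i = 1) : evnorm c ≤ 1 := by
  rw [evnorm, Real.sqrt_le_one]
  simpa [hc1] using Finset.sum_sq_le_sq_sum_of_nonneg (s := Finset.univ) fun i _ => hc0 i

lemma evnorm_mulVec_le_of_abs_le {A : Matrix (Fin M) (Fin M) ℝ} {η : ℝ} (hη : 0 ≤ η)
    (hA : ∀ i j, |A i j| ≤ η) (v : Fin M → ℝ) :
    evnorm (A *ᵥ v) ≤ M * η * evnorm v := by
  have hrow : ∀ i, |(A *ᵥ v) i| ≤ √M * η * evnorm v := fun i =>
    calc |(A *ᵥ v) i| ≤ evnorm (A i) * evnorm v := abs_dotProduct_le_evnorm_mul _ _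
      _ ≤ √M * η * evnorm v := by
        refine mul_le_mul_of_nonneg_right ?_ (evnorm_nonneg v)
        simpa [evnorm_const, abs_of_nonneg hη] using
          evnorm_le_evnorm_of_abs_le (v := fun _ => η) (hA i)
  calc evnorm (A *ᵥ v) ≤ evnorm (fun _ : Fin M => √M * η * evnorm v) :=
        evnorm_le_evnorm_of_abs_le hrow
    _ = M * η * evnorm v := by
        have hnonneg : 0 ≤ √M * η * evnorm v := by have := evnorm_nonneg v; positivity
        rw [evnorm_const, abs_of_nonneg hnonneg, ← mul_assoc, ← mul_assoc,
          Real.mul_self_sqrt M.cast_nonneg]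

lemma rowMatrix_mulVec (c v : Fin M → ℝ) : rowMatrix c *ᵥ v = fun _ => c ⬝ᵥ v := rfl

lemma rowMatrix_mul (c : Fin M → ℝ) (A : Matrix (Fin M) (Fin M) ℝ) :
    rowMatrix c * A = rowMatrix (c ᵥ* A) := by
  ext i j
  simp [rowMatrix, mul_apply, vecMul, dotProduct]

lemma mul_rowMatrix_of_sum_eq_one {A : Matrix (Fin M) (Fin M) ℝ} (hA : ∀ i, ∑ j, A i j = 1)
    (c : Fin M → ℝ) : A * rowMatrix c = rowMatrix c := by
  ext i j
  simp [rowMatrix, mul_apply, ← Finset.sum_mul, hA]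

lemma evnorm_rowMatrix_mulVec_le {c : Fin M → ℝ} (hc0 : ∀ i, 0 ≤ c i) (hc1 : ∑ i, c i = 1)
    (v : Fin M → ℝ) : evnorm (rowMatrix c *ᵥ v) ≤ √M * evnorm v := by
  rw [rowMatrix_mulVec, evnorm_const]
  gcongr
  calc |c ⬝ᵥ v| ≤ evnorm c * evnorm v := abs_dotProduct_le_evnorm_mul c v
    _ ≤ evnorm v :=
        mul_le_of_le_one_left (evnorm_nonneg v) (evnorm_le_one_of_stochastic hc0 hc1)

lemma consensus_error_update_eq {Q : Matrix (Fin M) (Fin M) ℝ} {c c' : Fin M → ℝ}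
    (hQ : ∀ i, ∑ j, Q i j = 1) (hc : ∑ i, c i = 1) (hc' : ∑ i, c' i = 1)
    (hQc : c' ᵥ* Q = c)
    (x t : Fin M → ℝ) (h : ℝ) :
    rowMatrix c' *ᵥ (Q *ᵥ x - h • t) - (Q *ᵥ x - h • t) =
      (Q - rowMatrix c) *ᵥ (rowMatrix c *ᵥ x - x) -
        h • ((1 - rowMatrix c') *ᵥ (rowMatrix c *ᵥ t - t)) := by
  have hP'Q : rowMatrix c' * Q = rowMatrix c := by rw [rowMatrix_mul, hQc]
  have hQP : Q * rowMatrix c = rowMatrix c := mul_rowMatrix_of_sum_eq_one hQ c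
  have hPP : rowMatrix c * rowMatrix c = rowMatrix c :=
    mul_rowMatrix_of_sum_eq_one (fun _ => hc) c
  have hP'P : rowMatrix c' * rowMatrix c = rowMatrix c :=
    mul_rowMatrix_of_sum_eq_one (fun _ => hc') c
  simp only [mulVec_sub, sub_mulVec, mulVec_smul, mulVec_mulVec, one_mulVec, sub_mul, one_mul,
    hP'Q, hQP, hPP, hP'P]
  module

lemma natCast_le_rpow_three_halves_mul_sqrt_add_one (n : ℕ) :
    (n : ℝ) ≤ (n : ℝ) ^ ((3 : ℝ) / 2) * (√n + 1) := by
  rcases n.eq_zero_or_pos with rfl | hn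
  · simp
  have hn1 : (1 : ℝ) ≤ n := by exact_mod_cast hn
  calc (n : ℝ) = (n : ℝ) ^ (1 : ℝ) := (Real.rpow_one _).symm
    _ ≤ (n : ℝ) ^ ((3 : ℝ) / 2) := Real.rpow_le_rpow_of_exponent_le hn1 (by norm_num)
    _ ≤ (n : ℝ) ^ ((3 : ℝ) / 2) * (√n + 1) :=
        le_mul_of_one_le_right (by positivity) (by linarith [Real.sqrt_nonneg n])

end

theorem inexact_consensus_error_contraction_general {M : ℕ}
    (Q : Matrix (Fin M) (Fin M) ℝ) (hQ : RowStochastic Q)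
    (c c' : Fin M → ℝ)
    (hc1 : ∑ i, c i = 1)
    (hc'0 : ∀ i, 0 ≤ c' i) (hc'1 : ∑ i, c' i = 1)
    (hQc : Matrix.vecMul c' Q = c)
    (η : ℝ) (hη : 0 ≤ η) (hclose : ∀ j i, |Q j i - c i| ≤ η)
    (x t : Fin M → ℝ) (h : ℝ) (hh : 0 ≤ h) :
    evnorm ((rowMatrix c').mulVec (Q.mulVec x - h • t) - (Q.mulVec x - h • t)) ≤
      (M : ℝ) ^ ((3 : ℝ) / 2) * (Real.sqrt M + 1) * η *
          evnorm ((rowMatrix c).mulVec x - x) +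
        h * (Real.sqrt M + 1) * evnorm ((rowMatrix c).mulVec t - t) := by
  rw [consensus_error_update_eq hQ.2 hc1 hc'1 hQc]
  set ex := rowMatrix c *ᵥ x - x
  set et := rowMatrix c *ᵥ t - t
  have hx : evnorm ((Q - rowMatrix c) *ᵥ ex) ≤ M * η * evnorm ex :=
    evnorm_mulVec_le_of_abs_le hη hclose ex
  have ht : evnorm ((1 - rowMatrix c') *ᵥ et) ≤ (√M + 1) * evnorm et := by
    rw [sub_mulVec, one_mulVec, add_mul, one_mul, add_comm]
    exact (evnorm_sub_le _ _).trans (by linarith [evnorm_rowMatrix_mulVec_le hc'0 hc'1 et])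
  calc _ ≤ evnorm ((Q - rowMatrix c) *ᵥ ex) + h * evnorm ((1 - rowMatrix c') *ᵥ et) :=
        (evnorm_sub_le _ _).trans_eq (by rw [evnorm_smul, abs_of_nonneg hh])
    _ ≤ M * η * evnorm ex + h * ((√M + 1) * evnorm et) := by gcongr
    _ ≤ _ := by
        rw [← mul_assoc]
        gcongr ?_ * _ * _ + _
        · exact evnorm_nonneg ex
        · exact natCast_le_rpow_three_halves_mul_sqrt_add_one M

/-- Contraction of the inexact consensus error: let `Q` be row stochastic, `c, c'`
stochastic vectors with `Qᵀc' = c` (equivalently `(1c'ᵀ)·Q = 1cᵀ`), and `η ≥ 0` with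
`|Q_{ji} − c_i| ≤ η` for all `j, i`. Then for any `x, t ∈ ℝ^M` and `h ≥ 0`, the
vector `x⁺ := Qx − h·t` satisfies
`‖(1c'ᵀ)x⁺ − x⁺‖ ≤ M^{3/2}(√M + 1)·η·‖(1cᵀ)x − x‖ + h(√M + 1)·‖(1cᵀ)t − t‖`. -/
theorem inexact_consensus_error_contraction {M : ℕ} (hM : 0 < M)
    (Q : Matrix (Fin M) (Fin M) ℝ) (hQ : RowStochastic Q)
    (c c' : Fin M → ℝ)
    (hc0 : ∀ i, 0 ≤ c i) (hc1 : ∑ i, c i = 1)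
    (hc'0 : ∀ i, 0 ≤ c' i) (hc'1 : ∑ i, c' i = 1)
    (hQc : Matrix.vecMul c' Q = c)
    (η : ℝ) (hη : 0 ≤ η) (hclose : ∀ j i, |Q j i - c i| ≤ η)
    (x t : Fin M → ℝ) (h : ℝ) (hh : 0 ≤ h) :
    evnorm ((rowMatrix c').mulVec (Q.mulVec x - h • t) - (Q.mulVec x - h • t)) ≤
      (M : ℝ) ^ ((3 : ℝ) / 2) * (Real.sqrt M + 1) * η *
          evnorm ((rowMatrix c).mulVec x - x) +
        h * (Real.sqrt M + 1) * evnorm ((rowMatrix c).mulVec t - t) :=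
  inexact_consensus_error_contraction_general Q hQ c c' hc1 hc'0 hc'1 hQc η hη hclose x t h hh
end
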